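/- Let Ω ⊂ R^n be a compact convex set with nonempty interior and let u_k, u be closed convex functions with dom u_k = dom u = Ω and |u_k| ≤ M, |u| ≤ M on Ω. If u_k(x) → u(x) for every x in the interior of Ω, then the epigraphs of u_k converge to the epigraph of u in the sense of Kuratowski: Li epi u_k = Ls epi u_k = epi u. -/

import Mathlib

/-!
A point of `epi u` is approached along a segment by points `(y, b)` with `y ∈ int Ω` and
`u y < b`; pointwise convergence at `y` puts `(y, b)` into `epi u_k` for all large `k`. Conversely,
if `(x_j, a_j) ∈ epi u_{k_j}` tend to `(x, a)`, then for fixed `t ∈ (0, 1]` convexity of `epi u_{k_j}`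
bounds `u_{k_j}((1 - t) x + t x₀) ≤ (1 - t) a_j + t M`, where `x₀ ∈ int Ω`; letting `j → ∞` and
then `t → 0` along a closed epigraph gives `(x, a) ∈ epi u`.
-/

open Filter Topology Set

section Kuratowski

variable {α : Type*} [PseudoEMetricSpace α]

theorem limsup_infEDist_eq_zero_of_mem_closure {ι : Type*} {l : Filter ι} {A : ι → Set α}
    {z : α} (hz : z ∈ closure {p | ∀ᶠ i in l, p ∈ A i}) :
    limsup (fun i => Metric.infEDist z (A i)) l = 0 := by
  refine le_antisymm (ENNReal.le_of_forall_pos_le_add fun ε hε _ => ?_) zero_le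
  obtain ⟨p, hp, hzp⟩ := EMetric.mem_closure_iff.1 hz ε (by exact_mod_cast hε)
  calc limsup (fun i => Metric.infEDist z (A i)) l
      ≤ edist z p := limsup_le_of_le (by isBoundedDefault)
        (hp.mono fun i hi => Metric.infEDist_le_edist_of_mem hi)
    _ ≤ 0 + ε := by rw [zero_add]; exact hzp.le

theorem exists_strictMono_tendsto_of_liminf_infEDist_eq_zero {A : ℕ → Set α} {z : α}
    (hz : liminf (fun k => Metric.infEDist z (A k)) atTop = 0) :
    ∃ φ : ℕ → ℕ, StrictMono φ ∧ ∃ w : ℕ → α, (∀ j, w j ∈ A (φ j)) ∧ Tendsto w atTop (𝓝 z) := by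
  have hfreq : ∀ j : ℕ, ∃ᶠ k in atTop, Metric.infEDist z (A k) < (j : ENNReal)⁻¹ := fun j =>
    frequently_lt_of_liminf_lt (by isBoundedDefault)
      (hz ▸ ENNReal.inv_pos.2 (ENNReal.natCast_ne_top j))
  obtain ⟨φ, hφ, hφA⟩ := extraction_forall_of_frequently hfreq
  choose w hwA hwz using fun j => Metric.infEDist_lt_iff.1 (hφA j)
  refine ⟨φ, hφ, w, hwA, tendsto_iff_edist_tendsto_0.2 ?_⟩
  refine tendsto_of_tendsto_of_tendsto_of_le_of_le tendsto_const_nhds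
    ENNReal.tendsto_inv_nat_nhds_zero (fun _ => zero_le) fun j => ?_
  rw [edist_comm]
  exact (hwz j).le

theorem setOf_limsup_infEDist_eq_zero_eq_and_setOf_liminf_infEDist_eq_zero_eq
    {A : ℕ → Set α} {F : Set α}
    (hLi : ∀ z ∈ F, limsup (fun k => Metric.infEDist z (A k)) atTop = 0)
    (hLs : ∀ z, liminf (fun k => Metric.infEDist z (A k)) atTop = 0 → z ∈ F) :
    {z | limsup (fun k => Metric.infEDist z (A k)) atTop = 0} = F ∧
      {z | liminf (fun k => Metric.infEDist z (A k)) atTop = 0} = F := by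
  refine ⟨Subset.antisymm (fun z hz => hLs z ?_) hLi,
    Subset.antisymm hLs fun z hz => ?_⟩
  · exact le_antisymm (hz.symm ▸ liminf_le_limsup) zero_le
  · exact le_antisymm ((hLi z hz).symm ▸ liminf_le_limsup) zero_le

end Kuratowski

section Epigraph

variable {E : Type*} [AddCommGroup E] [Module ℝ E] [TopologicalSpace E]

def epigraphOn (Ω : Set E) (f : E → ℝ) : Set (E × ℝ) := {z | z.1 ∈ Ω ∧ f z.1 ≤ z.2}

variable [IsTopologicalAddGroup E] [ContinuousSMul ℝ E]

theorem mem_closure_of_openSegment_subset {s : Set E} {x y : E} (h : openSegment ℝ x y ⊆ s) :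
    x ∈ closure s :=
  closure_mono h (segment_subset_closure_openSegment (left_mem_segment ℝ x y))

theorem openSegment_subset_interior_strictEpigraph {Ω : Set E} {f : E → ℝ} {x₀ : E}
    {z : E × ℝ} (hΩ : Convex ℝ Ω) (hf : Convex ℝ (epigraphOn Ω f)) (hx₀ : x₀ ∈ interior Ω)
    (hz : z ∈ epigraphOn Ω f) :
    openSegment ℝ z (x₀, f x₀ + 1) ⊆ {p | p.1 ∈ interior Ω ∧ f p.1 < p.2} := by
  rintro _ ⟨a, b, ha, hb, hab, rfl⟩
  have hmem : a • z + b • (x₀, f x₀) ∈ epigraphOn Ω f :=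
    hf hz ⟨interior_subset hx₀, le_rfl⟩ ha.le hb.le hab
  refine ⟨hΩ.combo_self_interior_mem_interior hz.1 hx₀ ha.le hb hab, ?_⟩
  have hle := hmem.2
  simp only [Prod.fst_add, Prod.smul_fst, Prod.snd_add, Prod.smul_snd, smul_eq_mul] at hle ⊢
  linarith

theorem epigraphOn_subset_closure_eventually_mem {ι : Type*} {l : Filter ι} {Ω : Set E}
    {u : ι → E → ℝ} {v : E → ℝ} (hΩ : Convex ℝ Ω) (hΩint : (interior Ω).Nonempty)
    (hv : Convex ℝ (epigraphOn Ω v))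
    (hlim : ∀ x ∈ interior Ω, Tendsto (fun i => u i x) l (𝓝 (v x))) :
    epigraphOn Ω v ⊆ closure {p | ∀ᶠ i in l, p ∈ epigraphOn Ω (u i)} := by
  obtain ⟨x₀, hx₀⟩ := hΩint
  refine fun z hz => mem_closure_of_openSegment_subset (y := (x₀, v x₀ + 1)) fun p hp => ?_
  obtain ⟨hp₁, hp₂⟩ := openSegment_subset_interior_strictEpigraph hΩ hv hx₀ hz hp
  exact ((hlim p.1 hp₁).eventually (gt_mem_nhds hp₂)).mono fun i hi =>
    ⟨interior_subset hp₁, hi.le⟩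

theorem eventually_le_of_mem_epigraphOn_of_tendsto {ι : Type*} {l : Filter ι} {Ω : Set E}
    {f : ι → E → ℝ} {M : ℝ} {x₀ x : E} {s t : ℝ} {w : ι → E × ℝ}
    (hf : ∀ i, Convex ℝ (epigraphOn Ω (f i))) (hfM : ∀ i, ∀ y ∈ Ω, f i y ≤ M)
    (hx₀ : x₀ ∈ interior Ω) (hs : 0 ≤ s) (ht : 0 < t) (hst : s + t = 1)
    (hw : ∀ i, w i ∈ epigraphOn Ω (f i)) (hwx : Tendsto (fun i => (w i).1) l (𝓝 x)) :
    ∀ᶠ i in l, f i (s • x + t • x₀) ≤ s * (w i).2 + t * M := by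
  -- `z i` is chosen so that `s • (w i).1 + t • z i = s • x + t • x₀`; it tends to `x₀`.
  set z : ι → E := fun i => x₀ + (s / t) • (x - (w i).1)
  have hz : Tendsto z l (𝓝 x₀) := by
    have := (tendsto_const_nhds (x := x₀)).add
      (((tendsto_const_nhds (x := x)).sub hwx).const_smul (s / t))
    rwa [sub_self, smul_zero, add_zero] at this
  filter_upwards [hz.eventually (isOpen_interior.mem_nhds hx₀)] with i hi
  have hzΩ : z i ∈ Ω := interior_subset hi
  have hmem : s • w i + t • (z i, M) ∈ epigraphOn Ω (f i) :=
    hf i (hw i) ⟨hzΩ, hfM i _ hzΩ⟩ hs ht.le hst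
  have hcomb : s • (w i).1 + t • z i = s • x + t • x₀ := by
    simp only [z, smul_add, smul_smul, mul_div_cancel₀ _ ht.ne']
    module
  simpa [epigraphOn, hcomb] using hmem.2

theorem mem_epigraphOn_of_tendsto {ι : Type*} {l : Filter ι} [l.NeBot] {Ω : Set E}
    {f : ι → E → ℝ} {v : E → ℝ} {M : ℝ} {x₀ : E} {w : ι → E × ℝ} {z : E × ℝ}
    (hΩ : Convex ℝ Ω) (hx₀ : x₀ ∈ interior Ω) (hf : ∀ i, Convex ℝ (epigraphOn Ω (f i)))
    (hfM : ∀ i, ∀ y ∈ Ω, f i y ≤ M) (hv : IsClosed (epigraphOn Ω v))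
    (hlim : ∀ x ∈ interior Ω, Tendsto (fun i => f i x) l (𝓝 (v x)))
    (hw : ∀ i, w i ∈ epigraphOn Ω (f i)) (hwz : Tendsto w l (𝓝 z)) :
    z ∈ epigraphOn Ω v := by
  have hw₁ : Tendsto (fun i => (w i).1) l (𝓝 z.1) := (continuous_fst.tendsto z).comp hwz
  have hw₂ : Tendsto (fun i => (w i).2) l (𝓝 z.2) := (continuous_snd.tendsto z).comp hwz
  have hzΩ : z.1 ∈ closure Ω := mem_closure_of_tendsto hw₁ (Eventually.of_forall fun i => (hw i).1)
  rw [← hv.closure_eq]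
  refine mem_closure_of_openSegment_subset (y := (x₀, M)) ?_
  rintro _ ⟨s, t, hs, ht, hst, rfl⟩
  have hy := hΩ.combo_closure_interior_mem_interior hzΩ hx₀ hs.le ht hst
  have hle : v (s • z.1 + t • x₀) ≤ s * z.2 + t * M :=
    le_of_tendsto_of_tendsto (hlim _ hy) ((hw₂.const_mul s).add_const (t * M))
      (eventually_le_of_mem_epigraphOn_of_tendsto hf hfM hx₀ hs.le ht hst hw hw₁)
  simpa [epigraphOn] using ⟨interior_subset hy, hle⟩

end Epigraph

theorem epigraphs_kuratowski_converge_general {n : ℕ} (Ω : Set (EuclideanSpace ℝ (Fin n)))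
    (hΩconv : Convex ℝ Ω) (hΩint : (interior Ω).Nonempty)
    (M : ℝ) (u : ℕ → EuclideanSpace ℝ (Fin n) → ℝ) (v : EuclideanSpace ℝ (Fin n) → ℝ)
    (hepiu : ∀ k, IsClosed {z : EuclideanSpace ℝ (Fin n) × ℝ | z.1 ∈ Ω ∧ u k z.1 ≤ z.2} ∧
      Convex ℝ {z : EuclideanSpace ℝ (Fin n) × ℝ | z.1 ∈ Ω ∧ u k z.1 ≤ z.2})
    (hepiv : IsClosed {z : EuclideanSpace ℝ (Fin n) × ℝ | z.1 ∈ Ω ∧ v z.1 ≤ z.2} ∧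
      Convex ℝ {z : EuclideanSpace ℝ (Fin n) × ℝ | z.1 ∈ Ω ∧ v z.1 ≤ z.2})
    (hbdu : ∀ k, ∀ x ∈ Ω, |u k x| ≤ M)
    (hlim : ∀ x ∈ interior Ω, Tendsto (fun k => u k x) atTop (nhds (v x))) :
    {z : EuclideanSpace ℝ (Fin n) × ℝ |
        limsup (fun k => EMetric.infEdist z {w : EuclideanSpace ℝ (Fin n) × ℝ |
          w.1 ∈ Ω ∧ u k w.1 ≤ w.2}) atTop = 0} =
      {z : EuclideanSpace ℝ (Fin n) × ℝ | z.1 ∈ Ω ∧ v z.1 ≤ z.2} ∧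
    {z : EuclideanSpace ℝ (Fin n) × ℝ |
        liminf (fun k => EMetric.infEdist z {w : EuclideanSpace ℝ (Fin n) × ℝ |
          w.1 ∈ Ω ∧ u k w.1 ≤ w.2}) atTop = 0} =
      {z : EuclideanSpace ℝ (Fin n) × ℝ | z.1 ∈ Ω ∧ v z.1 ≤ z.2} := by
  obtain ⟨x₀, hx₀⟩ := hΩint
  refine setOf_limsup_infEDist_eq_zero_eq_and_setOf_liminf_infEDist_eq_zero_eq
    (A := fun k => epigraphOn Ω (u k)) (F := epigraphOn Ω v)
    (fun z hz => limsup_infEDist_eq_zero_of_mem_closure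
      (epigraphOn_subset_closure_eventually_mem hΩconv ⟨x₀, hx₀⟩ hepiv.2 hlim hz))
    fun z hz => ?_
  obtain ⟨φ, hφ, w, hw, hwz⟩ := exists_strictMono_tendsto_of_liminf_infEDist_eq_zero hz
  exact mem_epigraphOn_of_tendsto hΩconv hx₀ (fun j => (hepiu (φ j)).2)
    (fun j x hx => (abs_le.1 (hbdu (φ j) x hx)).2) hepiv.1
    (fun x hx => (hlim x hx).comp hφ.tendsto_atTop) hw hwz

/-- Pointwise convergence on `Int Ω` of uniformly bounded closed convex functions with common
effective domain `Ω` (a compact convex set with nonempty interior) implies Kuratowski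
convergence of epigraphs: `Li epi u_k = Ls epi u_k = epi u`. -/
theorem epigraphs_kuratowski_converge {n : ℕ} (Ω : Set (EuclideanSpace ℝ (Fin n)))
    (hΩcomp : IsCompact Ω) (hΩconv : Convex ℝ Ω) (hΩint : (interior Ω).Nonempty)
    (M : ℝ) (u : ℕ → EuclideanSpace ℝ (Fin n) → ℝ) (v : EuclideanSpace ℝ (Fin n) → ℝ)
    (hepiu : ∀ k, IsClosed {z : EuclideanSpace ℝ (Fin n) × ℝ | z.1 ∈ Ω ∧ u k z.1 ≤ z.2} ∧
      Convex ℝ {z : EuclideanSpace ℝ (Fin n) × ℝ | z.1 ∈ Ω ∧ u k z.1 ≤ z.2})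
    (hepiv : IsClosed {z : EuclideanSpace ℝ (Fin n) × ℝ | z.1 ∈ Ω ∧ v z.1 ≤ z.2} ∧
      Convex ℝ {z : EuclideanSpace ℝ (Fin n) × ℝ | z.1 ∈ Ω ∧ v z.1 ≤ z.2})
    (hbdu : ∀ k, ∀ x ∈ Ω, |u k x| ≤ M) (hbdv : ∀ x ∈ Ω, |v x| ≤ M)
    (hlim : ∀ x ∈ interior Ω, Tendsto (fun k => u k x) atTop (nhds (v x))) :
    {z : EuclideanSpace ℝ (Fin n) × ℝ |
        limsup (fun k => EMetric.infEdist z {w : EuclideanSpace ℝ (Fin n) × ℝ |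
          w.1 ∈ Ω ∧ u k w.1 ≤ w.2}) atTop = 0} =
      {z : EuclideanSpace ℝ (Fin n) × ℝ | z.1 ∈ Ω ∧ v z.1 ≤ z.2} ∧
    {z : EuclideanSpace ℝ (Fin n) × ℝ |
        liminf (fun k => EMetric.infEdist z {w : EuclideanSpace ℝ (Fin n) × ℝ |
          w.1 ∈ Ω ∧ u k w.1 ≤ w.2}) atTop = 0} =
      {z : EuclideanSpace ℝ (Fin n) × ℝ | z.1 ∈ Ω ∧ v z.1 ≤ z.2} :=
  epigraphs_kuratowski_converge_general Ω hΩconv hΩint M u v hepiu hepiv hbdu hlim
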